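/- Let c ≥ 1 and n ≤ m ≤ cn. Let k(x,y) = ⟨φ(x), φ(y)⟩ for a measurable feature map φ into a separable Hilbert space with ‖φ(x)‖² ≤ κ for all x, and with k ≥ 0. Let X = (X_1,…,X_n) be i.i.d. from p and Y = (Y_1,…,Y_m) i.i.d. from q, independent. Then there exists a constant C > 0 depending only on c such that Var( MMD̂²(X,Y;k) ) ≤ C ( κ·MMD²(p,q;k)/n + κ²/n² ). -/

import Mathlib

open MeasureTheory
open scoped ENNReal NNReal BigOperators RealInnerProductSpace Classical

noncomputable section

/-- Empirical quantile of the finite family `f` at level `q`: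
`inf { r : ℝ | (1/|A|) ∑_{a∈A} 1{f a ≤ r} ≥ q }`. -/
def empQuantile {ι : Type*} [Fintype ι] (q : ℝ) (f : ι → ℝ) : ℝ :=
  sInf {r : ℝ | q ≤ (Finset.univ.filter fun a => f a ≤ r).card / (Fintype.card ι : ℝ)}

/-- Unbiased estimator of the squared MMD. -/
def mmdSqHat {X : Type*} (k : X → X → ℝ) {n m : ℕ} (x : Fin n → X) (y : Fin m → X) : ℝ :=
  (1 / ((n : ℝ) * ((n : ℝ) - 1))) * ∑ i : Fin n, ∑ i' : Fin n,
      (if i ≠ i' then k (x i) (x i') else 0)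
    + (1 / ((m : ℝ) * ((m : ℝ) - 1))) * ∑ j : Fin m, ∑ j' : Fin m,
      (if j ≠ j' then k (y j) (y j') else 0)
    - (2 / ((m : ℝ) * (n : ℝ))) * ∑ i : Fin n, ∑ j : Fin m, k (x i) (y j)

/-- Population squared MMD:
`∫∫ k dp dp + ∫∫ k dq dq − 2 ∫∫ k dp dq`. -/
def mmdSq {X : Type*} [MeasurableSpace X] (k : X → X → ℝ) (p q : Measure X) : ℝ :=
  (∫ x, ∫ x', k x x' ∂p ∂p) + (∫ y, ∫ y', k y y' ∂q ∂q) - 2 * (∫ x, ∫ y, k x y ∂q ∂p)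

/-- First `n` entries of a combined sample. -/
def xPart {X : Type*} (n m : ℕ) (z : Fin (n + m) → X) : Fin n → X := fun i => z (Fin.castAdd m i)

/-- Last `m` entries of a combined sample. -/
def yPart {X : Type*} (n m : ℕ) (z : Fin (n + m) → X) : Fin m → X := fun j => z (Fin.natAdd n j)

/-- The normaliser `N̂_k(z) = (1/(n(n−1))) ∑_{i≠j} k(z_i,z_j)²`. -/
def normHat {X : Type*} (k : X → X → ℝ) (n : ℕ) {N : ℕ} (z : Fin N → X) : ℝ :=
  (1 / ((n : ℝ) * ((n : ℝ) - 1))) * ∑ i : Fin N, ∑ j : Fin N,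
    (if i ≠ j then (k (z i) (z j)) ^ 2 else 0)

/-- The MMD-FUSE-1 statistic. -/
def fuse1Stat {X Θ : Type*} [MeasurableSpace Θ] (k : Θ → X → X → ℝ) (π : Measure Θ)
    (lam : ℝ) (n m : ℕ) (z : Fin (n + m) → X) : ℝ :=
  (1 / lam) * Real.log (∫ θ, Real.exp (lam * mmdSqHat (k θ) (xPart n m z) (yPart n m z)) ∂π)

/-- The MMD-FUSE-N statistic. -/
def fuseNStat {X Θ : Type*} [MeasurableSpace Θ] (k : Θ → X → X → ℝ) (π : Measure Θ)
    (lam : ℝ) (n m : ℕ) (z : Fin (n + m) → X) : ℝ :=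
  (1 / lam) * Real.log (∫ θ,
    Real.exp (lam * mmdSqHat (k θ) (xPart n m z) (yPart n m z) / Real.sqrt (normHat (k θ) n z)) ∂π)

/-- The uniform distribution on a finite nonempty type. -/
def uniformOn (G : Type*) [Fintype G] [Nonempty G] [MeasurableSpace G] : Measure G :=
  (PMF.uniformOfFintype G).toMeasure

instance uniformOn.instIsProbabilityMeasure (G : Type*) [Fintype G] [Nonempty G]
    [MeasurableSpace G] : IsProbabilityMeasure (uniformOn G) := by
  unfold uniformOn; infer_instance

instance (N : ℕ) : MeasurableSpace (Equiv.Perm (Fin N)) := ⊤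

/-- Real-valued KL divergence `∫ log(dρ/dπ) dρ` (meaningful when `ρ ≪ π` and the
integrand is `ρ`-integrable). -/
def klReal {Θ : Type*} [MeasurableSpace Θ] (ρ π : Measure Θ) : ℝ :=
  ∫ θ, Real.log ((ρ.rnDeriv π θ).toReal) ∂ρ

/-- The population FUSE-1 quantity `sup_ρ { MMD²(p,q;K_ρ) − KL(ρ‖π)/λ }`, the supremum
running over probability measures `ρ` with finite KL divergence to `π` (measures with
infinite KL contribute `−∞` and hence never enlarge the supremum). -/
def fuse1Pop {X Θ : Type*} [MeasurableSpace X] [MeasurableSpace Θ]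
    (k : Θ → X → X → ℝ) (π : Measure Θ) (lam : ℝ) (p q : Measure X) : ℝ :=
  sSup {x : ℝ | ∃ ρ : Measure Θ, IsProbabilityMeasure ρ ∧ ρ ≪ π ∧
    Integrable (fun θ => Real.log ((ρ.rnDeriv π θ).toReal)) ρ ∧
    x = mmdSq (fun a b => ∫ θ, k θ a b ∂ρ) p q - klReal ρ π / lam}

/-- Support of a measure on a topological measurable space: points all of whose open
neighbourhoods have positive measure. -/
def msupport {Θ : Type*} [TopologicalSpace Θ] [MeasurableSpace Θ] (π : Measure Θ) : Set Θ :=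
  {θ | ∀ U : Set Θ, IsOpen U → θ ∈ U → 0 < π U}

/-- The MMD two-sample U-statistic kernel. -/
def hker {X : Type*} (k : X → X → ℝ) (x x' y y' : X) : ℝ :=
  k x x' + k y y' - k x y' - k x' y

/-- The two-sample U-statistic `U(z)`. -/
def uStat {X : Type*} (k : X → X → ℝ) (n m : ℕ) (z : Fin (n + m) → X) : ℝ :=
  (1 / ((n : ℝ) * ((n : ℝ) - 1) * (m : ℝ) * ((m : ℝ) - 1))) *
    ∑ i : Fin n, ∑ i' : Fin n, ∑ j : Fin m, ∑ j' : Fin m,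
      if i ≠ i' ∧ j ≠ j' then
        hker k (z (Fin.castAdd m i)) (z (Fin.castAdd m i'))
          (z (Fin.natAdd n j)) (z (Fin.natAdd n j'))
      else 0

/-- The quantity `Ū(z)`. -/
def uBar {X : Type*} (k : X → X → ℝ) (n m : ℕ) (z : Fin (n + m) → X) : ℝ :=
  (1 / ((n : ℝ) * ((n : ℝ) - 1) * (m : ℝ) * ((m : ℝ) - 1))) *
    ⨆ σ : Equiv.Perm (Fin (n + m)),
      Real.sqrt (∑ i : Fin n, ∑ i' : Fin n,
        if i ≠ i' then
          (∑ j : Fin m, ∑ j' : Fin m,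
            if j ≠ j' then
              hker k (z (σ (Fin.castAdd m i))) (z (σ (Fin.castAdd m i')))
                (z (σ (Fin.natAdd n j))) (z (σ (Fin.natAdd n j')))
            else 0) ^ 2
        else 0)

/-- Frobenius norm of a real square matrix. -/
def matFrobNorm {n : ℕ} (A : Matrix (Fin n) (Fin n) ℝ) : ℝ :=
  Real.sqrt (∑ i, ∑ j, (A i j) ^ 2)

/-- ℓ²→ℓ² operator norm (largest singular value) of a real square matrix. -/
def matOpNorm {n : ℕ} (A : Matrix (Fin n) (Fin n) ℝ) : ℝ :=
  ‖LinearMap.toContinuousLinearMap (Matrix.toEuclideanLin A)‖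

end


section VarianceProofHelpers

open MeasureTheory ProbabilityTheory
open scoped RealInnerProductSpace Classical

set_option maxHeartbeats 2000000

variable {X : Type*} [MeasurableSpace X]

lemma bdd_integrable {Ω : Type*} [MeasurableSpace Ω] {μ : Measure Ω} [IsFiniteMeasure μ]
    {f : Ω → ℝ} (hf : AEStronglyMeasurable f μ) {M : ℝ} (hb : ∀ ω, |f ω| ≤ M) :
    Integrable f μ :=
  (integrable_const M).mono' hf (ae_of_all _ fun ω => by simpa [Real.norm_eq_abs] using hb ω)

lemma measurable_update_fun {n : ℕ} (j : Fin n) :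
    Measurable fun z : (Fin n → X) × X => Function.update z.1 j z.2 := by
  apply measurable_pi_lambda
  intro i
  by_cases hij : i = j
  · subst hij
    simpa only [Function.update_self] using measurable_snd
  · simp only [Function.update_of_ne hij]
    exact (measurable_pi_apply i).comp measurable_fst

lemma map_update_pi (p : Measure X) [IsProbabilityMeasure p] {n : ℕ} (j : Fin n) :
    Measure.map (fun z : (Fin n → X) × X => Function.update z.1 j z.2)
      ((Measure.pi fun _ : Fin n => p).prod p) = Measure.pi fun _ : Fin n => p := by
  refine (Measure.pi_eq fun s hs => ?_).symm
  rw [Measure.map_apply (measurable_update_fun j) (MeasurableSet.univ_pi hs)]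
  have hpre : (fun z : (Fin n → X) × X => Function.update z.1 j z.2) ⁻¹' (Set.pi Set.univ s)
      = (Set.pi Set.univ (Function.update s j Set.univ)) ×ˢ s j := by
    ext ⟨x, u⟩
    simp only [Set.mem_preimage, Set.mem_pi, Set.mem_univ, forall_true_left, Set.mem_prod]
    constructor
    · intro hz
      refine ⟨fun i => ?_, ?_⟩
      · by_cases hij : i = j
        · subst hij; simp [Function.update_self]
        · rw [Function.update_of_ne hij]
          have := hz i; rwa [Function.update_of_ne hij] at this
      · have := hz j; rwa [Function.update_self] at this
    · rintro ⟨h1, h2⟩ i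
      by_cases hij : i = j
      · subst hij; rwa [Function.update_self]
      · rw [Function.update_of_ne hij]
        have := h1 i; rwa [Function.update_of_ne hij] at this
  rw [hpre, Measure.prod_prod, Measure.pi_pi]
  have hfun : (fun i => p (Function.update s j Set.univ i))
      = Function.update (fun i => p (s i)) j 1 := by
    funext i
    by_cases hij : i = j
    · subst hij; simp
    · simp [Function.update_of_ne hij]
  rw [hfun, Finset.prod_update_of_mem (Finset.mem_univ j), one_mul,
    ← Finset.mul_prod_erase Finset.univ _ (Finset.mem_univ j), mul_comm,
    Finset.sdiff_singleton_eq_erase]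

lemma integral_peel (p : Measure X) [IsProbabilityMeasure p] {n : ℕ} (j : Fin n)
    {F : (Fin n → X) → ℝ} (hF : Measurable F) {M : ℝ} (hb : ∀ x, |F x| ≤ M) :
    ∫ x, F x ∂(Measure.pi fun _ : Fin n => p)
      = ∫ x, ∫ u, F (Function.update x j u) ∂p ∂(Measure.pi fun _ : Fin n => p) := by
  have h1 : ∫ x, F x ∂(Measure.pi fun _ : Fin n => p)
      = ∫ z : (Fin n → X) × X, F (Function.update z.1 j z.2)
          ∂((Measure.pi fun _ : Fin n => p).prod p) := by
    conv_lhs => rw [← map_update_pi p j]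
    rw [integral_map (measurable_update_fun j).aemeasurable
      (by rw [map_update_pi p j]; exact hF.aestronglyMeasurable)]
  rw [h1]
  exact integral_prod _ (bdd_integrable ((hF.comp (measurable_update_fun j)).aestronglyMeasurable)
    (fun z => hb _))


lemma peel_zero (p : Measure X) [IsProbabilityMeasure p] {n : ℕ} (j : Fin n)
    {F : (Fin n → X) → ℝ} (hF : Measurable F) {M : ℝ} (hb : ∀ x, |F x| ≤ M)
    (hz : ∀ x : Fin n → X, ∫ u, F (Function.update x j u) ∂p = 0) :
    ∫ x, F x ∂(Measure.pi fun _ : Fin n => p) = 0 := by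
  rw [integral_peel p j hF hb]
  rw [integral_congr_ae (ae_of_all _ hz)]
  exact integral_zero _ _

lemma moment_single (p : Measure X) [IsProbabilityMeasure p] {n : ℕ}
    {g : X → ℝ} (hg : Measurable g) {M : ℝ} (hM : 0 ≤ M) (hb : ∀ u, |g u| ≤ M)
    (h0 : ∫ u, g u ∂p = 0) :
    ∫ x, (∑ i, g (x i)) ^ 2 ∂(Measure.pi fun _ : Fin n => p) ≤ n * M ^ 2 := by
  set P := Measure.pi fun _ : Fin n => p with hP
  have hmeas : ∀ i : Fin n, Measurable fun x : Fin n → X => g (x i) :=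
    fun i => hg.comp (measurable_pi_apply i)
  have hpm : ∀ i l : Fin n, Measurable fun x : Fin n → X => g (x i) * g (x l) :=
    fun i l => (hmeas i).mul (hmeas l)
  have hpb : ∀ i l : Fin n, ∀ x : Fin n → X, |g (x i) * g (x l)| ≤ M ^ 2 := by
    intro i l x
    rw [abs_mul, sq]
    exact mul_le_mul (hb _) (hb _) (abs_nonneg _) hM
  have hint : ∀ i l : Fin n, Integrable (fun x => g (x i) * g (x l)) P :=
    fun i l => bdd_integrable (hpm i l).aestronglyMeasurable (hpb i l)
  have hsq : ∀ x : Fin n → X, (∑ i, g (x i)) ^ 2 = ∑ i, ∑ l, g (x i) * g (x l) := by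
    intro x; rw [sq, Finset.sum_mul_sum]
  calc ∫ x, (∑ i, g (x i)) ^ 2 ∂P = ∑ i, ∑ l, ∫ x, g (x i) * g (x l) ∂P := by
        rw [integral_congr_ae (ae_of_all _ hsq),
          integral_finset_sum _ (fun i _ => integrable_finset_sum _ (fun l _ => hint i l))]
        exact Finset.sum_congr rfl fun i _ => integral_finset_sum _ fun l _ => hint i l
    _ ≤ ∑ i : Fin n, ∑ l : Fin n, (if i = l then M ^ 2 else 0) := by
        refine Finset.sum_le_sum fun i _ => Finset.sum_le_sum fun l _ => ?_
        by_cases hil : i = l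
        · subst hil
          rw [if_pos rfl]
          calc ∫ x, g (x i) * g (x i) ∂P ≤ ∫ _x, M ^ 2 ∂P := by
                refine integral_mono (hint i i) (integrable_const _) fun x => ?_
                exact le_trans (le_abs_self _) (hpb i i x)
            _ = M ^ 2 := by simp
        · rw [if_neg hil]
          refine le_of_eq (peel_zero p l (hpm i l) (hpb i l) ?_)
          intro x
          have he : ∀ u, g (Function.update x l u i) * g (Function.update x l u l)
              = g (x i) * g u := by
            intro u
            rw [Function.update_of_ne hil, Function.update_self]
          simp_rw [he]
          rw [integral_const_mul, h0, mul_zero]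
    _ = n * M ^ 2 := by
        have h1 : ∀ i : Fin n, (∑ l : Fin n, if i = l then M ^ 2 else 0) = M ^ 2 := by
          intro i
          rw [Finset.sum_ite_eq Finset.univ i (fun _ => M ^ 2)]
          simp
        rw [Finset.sum_congr rfl fun i _ => h1 i, Finset.sum_const, Finset.card_univ,
          Fintype.card_fin, nsmul_eq_mul]

lemma moment_pair (p : Measure X) [IsProbabilityMeasure p] {n : ℕ}
    {h : X → X → ℝ} (hh : Measurable fun uv : X × X => h uv.1 uv.2)
    {M : ℝ} (hM : 0 ≤ M) (hb : ∀ u v, |h u v| ≤ M)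
    (hrow : ∀ u, ∫ v, h u v ∂p = 0) (hcol : ∀ v, ∫ u, h u v ∂p = 0) :
    ∫ x, (∑ i, ∑ i', if i ≠ i' then h (x i) (x i') else 0) ^ 2
        ∂(Measure.pi fun _ : Fin n => p) ≤ 2 * n ^ 2 * M ^ 2 := by
  set P := Measure.pi fun _ : Fin n => p with hP
  set a : Fin n × Fin n → (Fin n → X) → ℝ :=
    fun q x => if q.1 ≠ q.2 then h (x q.1) (x q.2) else 0 with ha
  have hresum : ∀ x : Fin n → X,
      (∑ i, ∑ i', if i ≠ i' then h (x i) (x i') else 0) = ∑ q : Fin n × Fin n, a q x := by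
    intro x; rw [Fintype.sum_prod_type]
  have hmeas : ∀ q, Measurable (a q) := by
    intro q
    by_cases hq : q.1 ≠ q.2
    · have : a q = fun x => h (x q.1) (x q.2) := funext fun x => if_pos hq
      rw [this]
      have hpair : Measurable fun x : Fin n → X => (x q.1, x q.2) :=
        (measurable_pi_apply _).prodMk (measurable_pi_apply _)
      exact hh.comp hpair
    · have : a q = fun _ => 0 := funext fun x => if_neg hq
      rw [this]
      exact measurable_const
  have hbd : ∀ q x, |a q x| ≤ M := by
    intro q x
    by_cases hq : q.1 ≠ q.2
    · rw [ha]; dsimp only; rw [if_pos hq]; exact hb _ _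
    · rw [ha]; dsimp only; rw [if_neg hq]; simpa using hM
  have hpm : ∀ q r, Measurable fun x => a q x * a r x := fun q r => (hmeas q).mul (hmeas r)
  have hpb : ∀ q r : Fin n × Fin n, ∀ x, |a q x * a r x| ≤ M ^ 2 := by
    intro q r x
    rw [abs_mul, sq]
    exact mul_le_mul (hbd _ _) (hbd _ _) (abs_nonneg _) hM
  have hint : ∀ q r, Integrable (fun x => a q x * a r x) P :=
    fun q r => bdd_integrable (hpm q r).aestronglyMeasurable (hpb q r)
  have key : ∀ q r : Fin n × Fin n, ∫ x, a q x * a r x ∂P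
      ≤ if r = q ∨ r = q.swap then M ^ 2 else 0 := by
    intro q r
    have hM2 : (0:ℝ) ≤ M ^ 2 := sq_nonneg M
    by_cases hq : q.1 = q.2
    · have hz : a q = fun _ => 0 := funext fun x => if_neg (by simpa using hq)
      rw [hz]
      simp only [zero_mul, integral_zero]
      split_ifs <;> simp [hM2]
    · by_cases hr : r.1 = r.2
      · have hz : a r = fun _ => 0 := funext fun x => if_neg (by simpa using hr)
        rw [hz]
        simp only [mul_zero, integral_zero]
        split_ifs <;> simp [hM2]
      · have haq : ∀ x : Fin n → X, a q x = h (x q.1) (x q.2) := fun x => if_pos hq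
        have har : ∀ x : Fin n → X, a r x = h (x r.1) (x r.2) := fun x => if_pos hr
        by_cases hqr : r = q ∨ r = q.swap
        · rw [if_pos hqr]
          calc ∫ x, a q x * a r x ∂P ≤ ∫ _x, M ^ 2 ∂P :=
                integral_mono (hint q r) (integrable_const _)
                  (fun x => le_trans (le_abs_self _) (hpb q r x))
            _ = M ^ 2 := by simp
        · rw [if_neg hqr]
          push_neg at hqr
          obtain ⟨hq1, hq2⟩ := hqr
          by_cases hA : r.1 = q.1 ∨ r.1 = q.2
          · have h1 : r.2 ≠ q.1 := by
              intro e
              rcases hA with hA | hA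
              · exact hr (hA.trans e.symm)
              · exact hq2 (Prod.ext (by simp [hA]) (by simp [e]))
            have h2 : r.2 ≠ q.2 := by
              intro e
              rcases hA with hA | hA
              · exact hq1 (Prod.ext hA e)
              · exact hr (hA.trans e.symm)
            refine le_of_eq (peel_zero p r.2 (hpm q r) (hpb q r) ?_)
            intro x
            have he : ∀ u, a q (Function.update x r.2 u) * a r (Function.update x r.2 u)
                = h (x q.1) (x q.2) * h (x r.1) u := by
              intro u
              rw [haq, har, Function.update_of_ne (Ne.symm h1), Function.update_of_ne (Ne.symm h2),
                Function.update_of_ne (fun e => hr e), Function.update_self]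
            simp_rw [he]
            rw [integral_const_mul, hrow, mul_zero]
          · push_neg at hA
            obtain ⟨h1, h2⟩ := hA
            refine le_of_eq (peel_zero p r.1 (hpm q r) (hpb q r) ?_)
            intro x
            have he : ∀ u, a q (Function.update x r.1 u) * a r (Function.update x r.1 u)
                = h (x q.1) (x q.2) * h u (x r.2) := by
              intro u
              rw [haq, har, Function.update_of_ne (Ne.symm h1), Function.update_of_ne (Ne.symm h2),
                Function.update_of_ne (fun e => hr e.symm), Function.update_self]
            simp_rw [he]
            rw [integral_const_mul, hcol, mul_zero]
  calc ∫ x, (∑ i, ∑ i', if i ≠ i' then h (x i) (x i') else 0) ^ 2 ∂P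
      = ∑ q : Fin n × Fin n, ∑ r : Fin n × Fin n, ∫ x, a q x * a r x ∂P := by
        have hsq : ∀ x : Fin n → X,
            (∑ i, ∑ i', if i ≠ i' then h (x i) (x i') else 0) ^ 2
              = ∑ q : Fin n × Fin n, ∑ r : Fin n × Fin n, a q x * a r x := by
          intro x; rw [hresum x, sq, Finset.sum_mul_sum]
        rw [integral_congr_ae (ae_of_all _ hsq),
          integral_finset_sum _ (fun q _ => integrable_finset_sum _ (fun r _ => hint q r))]
        exact Finset.sum_congr rfl fun q _ => integral_finset_sum _ fun r _ => hint q r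
    _ ≤ ∑ _q : Fin n × Fin n, (2 * M ^ 2) := by
        refine Finset.sum_le_sum fun q _ => ?_
        have step : ∀ r : Fin n × Fin n, ∫ x, a q x * a r x ∂P
            ≤ (if r = q then M ^ 2 else 0) + (if r = q.swap then M ^ 2 else 0) := by
          intro r
          refine le_trans (key q r) ?_
          have hM2 : (0:ℝ) ≤ M ^ 2 := sq_nonneg M
          by_cases e1 : r = q
          · by_cases e2 : r = q.swap
            · rw [if_pos (Or.inl e1), if_pos e1, if_pos e2]; nlinarith
            · rw [if_pos (Or.inl e1), if_pos e1, if_neg e2, add_zero]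
          · by_cases e2 : r = q.swap
            · rw [if_pos (Or.inr e2), if_neg e1, if_pos e2, zero_add]
            · rw [if_neg (by tauto), if_neg e1, if_neg e2, add_zero]
        refine le_trans (Finset.sum_le_sum fun r _ => step r) ?_
        rw [Finset.sum_add_distrib, Finset.sum_ite_eq' Finset.univ q (fun _ => M ^ 2),
          Finset.sum_ite_eq' Finset.univ q.swap (fun _ => M ^ 2)]
        simp only [Finset.mem_univ, if_pos]
        ring_nf
        exact le_refl _
    _ ≤ 2 * n ^ 2 * M ^ 2 := by
        rw [Finset.sum_const, Finset.card_univ, Fintype.card_prod, Fintype.card_fin,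
          nsmul_eq_mul]
        push_cast
        nlinarith [sq_nonneg M]


lemma moment_cross (p q : Measure X) [IsProbabilityMeasure p] [IsProbabilityMeasure q]
    {n m : ℕ} {w : X → X → ℝ} (hw : Measurable fun uv : X × X => w uv.1 uv.2)
    {M : ℝ} (hM : 0 ≤ M) (hb : ∀ u v, |w u v| ≤ M)
    (hrow : ∀ u, ∫ v, w u v ∂q = 0) (hcol : ∀ v, ∫ u, w u v ∂p = 0) :
    ∫ ω, (∑ i : Fin n, ∑ j : Fin m, w (ω.1 i) (ω.2 j)) ^ 2
        ∂((Measure.pi fun _ : Fin n => p).prod (Measure.pi fun _ : Fin m => q))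
      ≤ (n * m) * M ^ 2 := by
  set P := Measure.pi fun _ : Fin n => p with hP
  set Q := Measure.pi fun _ : Fin m => q with hQ
  set μ := P.prod Q with hμ
  set a : Fin n × Fin m → (Fin n → X) × (Fin m → X) → ℝ :=
    fun s ω => w (ω.1 s.1) (ω.2 s.2) with haa
  have hmeas : ∀ s, Measurable (a s) := by
    intro s
    have hpair : Measurable fun ω : (Fin n → X) × (Fin m → X) => (ω.1 s.1, ω.2 s.2) :=
      ((measurable_pi_apply _).comp measurable_fst).prodMk
        ((measurable_pi_apply _).comp measurable_snd)
    exact hw.comp hpair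
  have hbd : ∀ s ω, |a s ω| ≤ M := fun s ω => hb _ _
  have hpm : ∀ s t, Measurable fun ω => a s ω * a t ω := fun s t => (hmeas s).mul (hmeas t)
  have hpb : ∀ s t : Fin n × Fin m, ∀ ω, |a s ω * a t ω| ≤ M ^ 2 := by
    intro s t ω
    rw [abs_mul, sq]
    exact mul_le_mul (hbd _ _) (hbd _ _) (abs_nonneg _) hM
  have hint : ∀ s t, Integrable (fun ω => a s ω * a t ω) μ :=
    fun s t => bdd_integrable (hpm s t).aestronglyMeasurable (hpb s t)
  have key : ∀ s t : Fin n × Fin m, ∫ ω, a s ω * a t ω ∂μ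
      ≤ if t = s then M ^ 2 else 0 := by
    intro s t
    by_cases hst : t = s
    · rw [if_pos hst]
      calc ∫ ω, a s ω * a t ω ∂μ ≤ ∫ _ω, M ^ 2 ∂μ :=
            integral_mono (hint s t) (integrable_const _)
              (fun ω => le_trans (le_abs_self _) (hpb s t ω))
        _ = M ^ 2 := by simp
    · rw [if_neg hst]
      by_cases h2 : t.2 = s.2
      · -- then t.1 ≠ s.1 : integrate over P inside, peel at t.1, use hcol
        have h1 : t.1 ≠ s.1 := fun e => hst (Prod.ext e h2)
        have hiz : ∫ ω, a s ω * a t ω ∂μ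
            = ∫ y, ∫ x, a s (x, y) * a t (x, y) ∂P ∂Q :=
          integral_prod_symm _ (hint s t)
        rw [hiz]
        have hinner : ∀ y : Fin m → X, ∫ x, a s (x, y) * a t (x, y) ∂P = 0 := by
          intro y
          have hFm : Measurable fun x : Fin n → X => a s (x, y) * a t (x, y) := by
            have h1m : Measurable fun x : Fin n → X => (x s.1, y s.2) :=
              (measurable_pi_apply _).prodMk measurable_const
            have h2m : Measurable fun x : Fin n → X => (x t.1, y t.2) :=
              (measurable_pi_apply _).prodMk measurable_const
            exact (hw.comp h1m).mul (hw.comp h2m)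
          have hFb : ∀ x : Fin n → X, |a s (x, y) * a t (x, y)| ≤ M ^ 2 := by
            intro x
            rw [abs_mul, sq]
            exact mul_le_mul (hb _ _) (hb _ _) (abs_nonneg _) hM
          refine peel_zero p t.1 hFm hFb ?_
          intro x
          have he : ∀ u, a s (Function.update x t.1 u, y) * a t (Function.update x t.1 u, y)
              = w (x s.1) (y s.2) * w u (y t.2) := by
            intro u
            rw [haa]
            dsimp only
            rw [Function.update_of_ne (Ne.symm h1), Function.update_self]
          simp_rw [he]
          rw [integral_const_mul, hcol, mul_zero]
        rw [integral_congr_ae (ae_of_all _ hinner)]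
        simp
      · -- t.2 ≠ s.2 : integrate over Q inside, peel at t.2, use hrow
        have hiz : ∫ ω, a s ω * a t ω ∂μ
            = ∫ x, ∫ y, a s (x, y) * a t (x, y) ∂Q ∂P :=
          integral_prod _ (hint s t)
        rw [hiz]
        have hinner : ∀ x : Fin n → X, ∫ y, a s (x, y) * a t (x, y) ∂Q = 0 := by
          intro x
          have hFm : Measurable fun y : Fin m → X => a s (x, y) * a t (x, y) := by
            have h1m : Measurable fun y : Fin m → X => (x s.1, y s.2) :=
              measurable_const.prodMk (measurable_pi_apply _)
            have h2m : Measurable fun y : Fin m → X => (x t.1, y t.2) :=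
              measurable_const.prodMk (measurable_pi_apply _)
            exact (hw.comp h1m).mul (hw.comp h2m)
          have hFb : ∀ y : Fin m → X, |a s (x, y) * a t (x, y)| ≤ M ^ 2 := by
            intro y
            rw [abs_mul, sq]
            exact mul_le_mul (hb _ _) (hb _ _) (abs_nonneg _) hM
          refine peel_zero q t.2 hFm hFb ?_
          intro y
          have he : ∀ u, a s (x, Function.update y t.2 u) * a t (x, Function.update y t.2 u)
              = w (x s.1) (y s.2) * w (x t.1) u := by
            intro u
            rw [haa]
            dsimp only
            rw [Function.update_of_ne (Ne.symm h2), Function.update_self]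
          simp_rw [he]
          rw [integral_const_mul, hrow, mul_zero]
        rw [integral_congr_ae (ae_of_all _ hinner)]
        simp
  calc ∫ ω, (∑ i : Fin n, ∑ j : Fin m, w (ω.1 i) (ω.2 j)) ^ 2 ∂μ
      = ∑ s : Fin n × Fin m, ∑ t : Fin n × Fin m, ∫ ω, a s ω * a t ω ∂μ := by
        have hsq : ∀ ω : (Fin n → X) × (Fin m → X),
            (∑ i : Fin n, ∑ j : Fin m, w (ω.1 i) (ω.2 j)) ^ 2
              = ∑ s : Fin n × Fin m, ∑ t : Fin n × Fin m, a s ω * a t ω := by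
          intro ω
          rw [show (∑ i : Fin n, ∑ j : Fin m, w (ω.1 i) (ω.2 j)) = ∑ s : Fin n × Fin m, a s ω
            from (Fintype.sum_prod_type (fun s : Fin n × Fin m => a s ω)).symm, sq, Finset.sum_mul_sum]
        rw [integral_congr_ae (ae_of_all _ hsq),
          integral_finset_sum _ (fun s _ => integrable_finset_sum _ (fun t _ => hint s t))]
        exact Finset.sum_congr rfl fun s _ => integral_finset_sum _ fun t _ => hint s t
    _ ≤ ∑ _s : Fin n × Fin m, M ^ 2 := by
        refine Finset.sum_le_sum fun s _ => ?_
        refine le_trans (Finset.sum_le_sum fun t _ => key s t) ?_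
        rw [Finset.sum_ite_eq' Finset.univ s (fun _ => M ^ 2)]
        simp
    _ ≤ (n * m) * M ^ 2 := by
        rw [Finset.sum_const, Finset.card_univ, Fintype.card_prod, Fintype.card_fin,
          Fintype.card_fin, nsmul_eq_mul]
        push_cast
        exact le_refl _


end VarianceProofHelpers

section VarianceProofAlgebra

open MeasureTheory ProbabilityTheory
open scoped RealInnerProductSpace Classical

set_option maxHeartbeats 2000000

variable {H : Type*} [NormedAddCommGroup H] [InnerProductSpace ℝ H]

lemma sum_ite_ne_const {n : ℕ} (c : ℝ) (i : Fin n) :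
    (∑ i' : Fin n, if i ≠ i' then c else 0) = ((n : ℝ) - 1) * c := by
  have h : ∀ i' : Fin n, (if i ≠ i' then c else 0) = c - (if i' = i then c else 0) := by
    intro i'
    by_cases h : i = i'
    · rw [if_neg (by simpa using h), if_pos h.symm, sub_self]
    · rw [if_pos h, if_neg (fun e => h e.symm), sub_zero]
  rw [Finset.sum_congr rfl fun i' _ => h i', Finset.sum_sub_distrib,
    Finset.sum_ite_eq' Finset.univ i (fun _ => c), Finset.sum_const, Finset.card_univ,
    Fintype.card_fin, nsmul_eq_mul]
  simp only [Finset.mem_univ, if_pos]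
  ring

lemma sum_ite_ne_fun {n : ℕ} (f : Fin n → ℝ) (i : Fin n) :
    (∑ i' : Fin n, if i ≠ i' then f i' else 0) = (∑ i', f i') - f i := by
  have h : ∀ i' : Fin n, (if i ≠ i' then f i' else 0) = f i' - (if i' = i then f i' else 0) := by
    intro i'
    by_cases h : i = i'
    · rw [if_neg (by simpa using h), if_pos h.symm, sub_self]
    · rw [if_pos h, if_neg (fun e => h e.symm), sub_zero]
  rw [Finset.sum_congr rfl fun i' _ => h i', Finset.sum_sub_distrib,
    Finset.sum_ite_eq' Finset.univ i f]
  simp only [Finset.mem_univ, if_pos]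

lemma expand_xx {n : ℕ} (f : Fin n → H) (c : H) :
    (∑ i : Fin n, ∑ i' : Fin n, if i ≠ i' then (⟪f i + c, f i' + c⟫) else 0)
      = (∑ i : Fin n, ∑ i' : Fin n, if i ≠ i' then (⟪f i, f i'⟫) else 0)
        + (2 * ((n : ℝ) - 1)) * (∑ i, ⟪f i, c⟫)
        + ((n : ℝ) * ((n : ℝ) - 1)) * ⟪c, c⟫ := by
  have hpt : ∀ i i' : Fin n, (if i ≠ i' then (⟪f i + c, f i' + c⟫) else 0)
      = (if i ≠ i' then (⟪f i, f i'⟫) else 0) + ((if i ≠ i' then (⟪f i, c⟫) else 0)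
        + ((if i ≠ i' then (⟪f i', c⟫) else 0) + (if i ≠ i' then (⟪c, c⟫) else 0))) := by
    intro i i'
    by_cases h : i ≠ i'
    · rw [if_pos h, if_pos h, if_pos h, if_pos h, if_pos h, inner_add_left, inner_add_right,
        inner_add_right, real_inner_comm c (f i')]
      ring
    · rw [if_neg h, if_neg h, if_neg h, if_neg h, if_neg h]; ring
  rw [Finset.sum_congr rfl fun i _ => Finset.sum_congr rfl fun i' _ => hpt i i']
  simp only [Finset.sum_add_distrib]
  have hT2 : (∑ i : Fin n, ∑ i' : Fin n, if i ≠ i' then (⟪f i, c⟫) else 0)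
      = ((n : ℝ) - 1) * ∑ i, ⟪f i, c⟫ := by
    rw [Finset.sum_congr rfl fun i _ => sum_ite_ne_const (⟪f i, c⟫) i, ← Finset.mul_sum]
  have hT3 : (∑ i : Fin n, ∑ i' : Fin n, if i ≠ i' then (⟪f i', c⟫) else 0)
      = ((n : ℝ) - 1) * ∑ i, ⟪f i, c⟫ := by
    rw [Finset.sum_congr rfl fun i _ => sum_ite_ne_fun (fun i' => (⟪f i', c⟫)) i,
      Finset.sum_sub_distrib, Finset.sum_const, Finset.card_univ, Fintype.card_fin, nsmul_eq_mul]
    ring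
  have hT4 : (∑ _i : Fin n, ∑ i' : Fin n, if _i ≠ i' then (⟪c, c⟫) else 0)
      = (n : ℝ) * ((n : ℝ) - 1) * ⟪c, c⟫ := by
    rw [Finset.sum_congr rfl fun i _ => sum_ite_ne_const (⟪c, c⟫) i, Finset.sum_const,
      Finset.card_univ, Fintype.card_fin, nsmul_eq_mul]
    ring
  rw [hT2, hT3, hT4]
  ring

lemma expand_xy {n m : ℕ} (f : Fin n → H) (g : Fin m → H) (c d : H) :
    (∑ i : Fin n, ∑ j : Fin m, (⟪f i + c, g j + d⟫))
      = (∑ i : Fin n, ∑ j : Fin m, (⟪f i, g j⟫)) + (m : ℝ) * (∑ i, ⟪f i, d⟫)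
        + (n : ℝ) * (∑ j, ⟪g j, c⟫) + (n : ℝ) * (m : ℝ) * ⟪c, d⟫ := by
  have hpt : ∀ (i : Fin n) (j : Fin m), (⟪f i + c, g j + d⟫)
      = (⟪f i, g j⟫) + ((⟪f i, d⟫) + ((⟪g j, c⟫) + (⟪c, d⟫))) := by
    intro i j
    rw [inner_add_left, inner_add_right, inner_add_right, real_inner_comm c (g j)]
    ring
  rw [Finset.sum_congr rfl fun i _ => Finset.sum_congr rfl fun j _ => hpt i j]
  simp only [Finset.sum_add_distrib, Finset.sum_const, Finset.card_univ, Fintype.card_fin,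
    nsmul_eq_mul]
  rw [← Finset.mul_sum]
  ring

lemma mmd_identity {X : Type*} (φ : X → H) (k : X → X → ℝ)
    (hk : ∀ x y, k x y = ⟪φ x, φ y⟫) (μp μq : H) {n m : ℕ}
    (hn2 : 2 ≤ n) (hm2 : 2 ≤ m) (x : Fin n → X) (y : Fin m → X) :
    mmdSqHat k x y - ⟪μp - μq, μp - μq⟫
      = (2 / (n : ℝ)) * (∑ i, ⟪φ (x i) - μp, μp - μq⟫)
        + (-((2 / (m : ℝ)) * (∑ j, ⟪φ (y j) - μq, μp - μq⟫)))
        + (1 / ((n : ℝ) * ((n : ℝ) - 1))) * (∑ i : Fin n, ∑ i' : Fin n,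
            if i ≠ i' then (⟪φ (x i) - μp, φ (x i') - μp⟫) else 0)
        + (1 / ((m : ℝ) * ((m : ℝ) - 1))) * (∑ j : Fin m, ∑ j' : Fin m,
            if j ≠ j' then (⟪φ (y j) - μq, φ (y j') - μq⟫) else 0)
        + (-((2 / ((m : ℝ) * (n : ℝ))) * (∑ i : Fin n, ∑ j : Fin m,
            (⟪φ (x i) - μp, φ (y j) - μq⟫)))) := by
  have hsacp : ∀ u : X, φ u - μp + μp = φ u := fun u => by abel
  have hsacq : ∀ u : X, φ u - μq + μq = φ u := fun u => by abel
  have e1 : (∑ i : Fin n, ∑ i' : Fin n, if i ≠ i' then k (x i) (x i') else 0)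
      = (∑ i : Fin n, ∑ i' : Fin n, if i ≠ i' then (⟪φ (x i) - μp, φ (x i') - μp⟫) else 0)
        + (2 * ((n : ℝ) - 1)) * (∑ i, ⟪φ (x i) - μp, μp⟫)
        + ((n : ℝ) * ((n : ℝ) - 1)) * ⟪μp, μp⟫ := by
    have h := expand_xx (fun i => φ (x i) - μp) μp
    simp only [hsacp] at h
    simp only [hk]
    exact h
  have e2 : (∑ j : Fin m, ∑ j' : Fin m, if j ≠ j' then k (y j) (y j') else 0)
      = (∑ j : Fin m, ∑ j' : Fin m, if j ≠ j' then (⟪φ (y j) - μq, φ (y j') - μq⟫) else 0)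
        + (2 * ((m : ℝ) - 1)) * (∑ j, ⟪φ (y j) - μq, μq⟫)
        + ((m : ℝ) * ((m : ℝ) - 1)) * ⟪μq, μq⟫ := by
    have h := expand_xx (fun j => φ (y j) - μq) μq
    simp only [hsacq] at h
    simp only [hk]
    exact h
  have e3 : (∑ i : Fin n, ∑ j : Fin m, k (x i) (y j))
      = (∑ i : Fin n, ∑ j : Fin m, (⟪φ (x i) - μp, φ (y j) - μq⟫))
        + (m : ℝ) * (∑ i, ⟪φ (x i) - μp, μq⟫)
        + (n : ℝ) * (∑ j, ⟪φ (y j) - μq, μp⟫)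
        + (n : ℝ) * (m : ℝ) * ⟪μp, μq⟫ := by
    have h := expand_xy (fun i => φ (x i) - μp) (fun j => φ (y j) - μq) μp μq
    simp only [hsacp, hsacq] at h
    simp only [hk]
    exact h
  have hnR : (2:ℝ) ≤ (n : ℝ) := by exact_mod_cast hn2
  have hmR : (2:ℝ) ≤ (m : ℝ) := by exact_mod_cast hm2
  have hn0 : ((n : ℝ)) ≠ 0 := by linarith
  have hn1 : ((n : ℝ) - 1) ≠ 0 := by linarith
  have hm0 : ((m : ℝ)) ≠ 0 := by linarith
  have hm1 : ((m : ℝ) - 1) ≠ 0 := by linarith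
  have d1 : ⟪μp - μq, μp - μq⟫
      = ⟪μp, μp⟫ - 2 * ⟪μp, μq⟫ + ⟪μq, μq⟫ := by
    rw [inner_sub_left, inner_sub_right, inner_sub_right, real_inner_comm μq μp]
    ring
  have d2 : (∑ i, ⟪φ (x i) - μp, μp - μq⟫)
      = (∑ i, ⟪φ (x i) - μp, μp⟫) - (∑ i, ⟪φ (x i) - μp, μq⟫) := by
    rw [← Finset.sum_sub_distrib]
    exact Finset.sum_congr rfl fun i _ => inner_sub_right _ _ _
  have d3 : (∑ j, ⟪φ (y j) - μq, μp - μq⟫)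
      = (∑ j, ⟪φ (y j) - μq, μp⟫) - (∑ j, ⟪φ (y j) - μq, μq⟫) := by
    rw [← Finset.sum_sub_distrib]
    exact Finset.sum_congr rfl fun j _ => inner_sub_right _ _ _
  unfold mmdSqHat
  rw [e1, e2, e3, d1, d2, d3]
  field_simp
  ring


end VarianceProofAlgebra

section VarianceProofMain

open MeasureTheory ProbabilityTheory
open scoped RealInnerProductSpace Classical

set_option maxHeartbeats 4000000

lemma abs_ite_sum_bound {N : ℕ} (F : Fin N → Fin N → ℝ) (κ : ℝ) (hb : ∀ i j, |F i j| ≤ κ) :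
    |∑ i, ∑ j, if i ≠ j then F i j else 0| ≤ (N : ℝ) * ((N : ℝ) - 1) * κ := by
  refine le_trans (Finset.abs_sum_le_sum_abs _ _) ?_
  have hrow : ∀ i : Fin N, |∑ j, if i ≠ j then F i j else 0| ≤ ((N : ℝ) - 1) * κ := by
    intro i
    refine le_trans (Finset.abs_sum_le_sum_abs _ _) ?_
    have h1 : ∀ j, |if i ≠ j then F i j else 0| ≤ (if i ≠ j then κ else 0) := by
      intro j
      by_cases h : i ≠ j
      · rw [if_pos h, if_pos h]; exact hb i j
      · rw [if_neg h, if_neg h, abs_zero]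
    exact le_trans (Finset.sum_le_sum fun j _ => h1 j) (le_of_eq (sum_ite_ne_const κ i))
  refine le_trans (Finset.sum_le_sum fun i _ => hrow i) ?_
  rw [Finset.sum_const, Finset.card_univ, Fintype.card_fin, nsmul_eq_mul]
  ring_nf
  exact le_refl _

lemma abs_sum_sum_bound {N M' : ℕ} (F : Fin N → Fin M' → ℝ) (κ : ℝ) (hκ : 0 ≤ κ)
    (hb : ∀ i j, |F i j| ≤ κ) :
    |∑ i, ∑ j, F i j| ≤ (N : ℝ) * (M' : ℝ) * κ := by
  refine le_trans (Finset.abs_sum_le_sum_abs _ _) ?_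
  have hrow : ∀ i : Fin N, |∑ j, F i j| ≤ (M' : ℝ) * κ := by
    intro i
    refine le_trans (Finset.abs_sum_le_sum_abs _ _) ?_
    refine le_trans (Finset.sum_le_sum fun j _ => hb i j) ?_
    rw [Finset.sum_const, Finset.card_univ, Fintype.card_fin, nsmul_eq_mul]
  refine le_trans (Finset.sum_le_sum fun i _ => hrow i) ?_
  rw [Finset.sum_const, Finset.card_univ, Fintype.card_fin, nsmul_eq_mul]
  rw [← mul_assoc]

lemma abs_sum_bound {N : ℕ} (f : Fin N → ℝ) (B : ℝ) (hb : ∀ i, |f i| ≤ B) :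
    |∑ i, f i| ≤ (N : ℝ) * B := by
  refine le_trans (Finset.abs_sum_le_sum_abs _ _) ?_
  refine le_trans (Finset.sum_le_sum fun i _ => hb i) ?_
  rw [Finset.sum_const, Finset.card_univ, Fintype.card_fin, nsmul_eq_mul]

lemma integral_comp_fst {Ω₁ Ω₂ : Type*} [MeasurableSpace Ω₁] [MeasurableSpace Ω₂]
    (μ1 : Measure Ω₁) (μ2 : Measure Ω₂) [IsProbabilityMeasure μ1] [IsProbabilityMeasure μ2]
    {f : Ω₁ → ℝ} (hf : AEStronglyMeasurable f μ1) :
    ∫ ω, f ω.1 ∂(μ1.prod μ2) = ∫ x, f x ∂μ1 := by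
  have hmap : Measure.map Prod.fst (μ1.prod μ2) = μ1 := by
    rw [Measure.map_fst_prod]; simp
  conv_rhs => rw [← hmap]
  rw [integral_map measurable_fst.aemeasurable (by rw [hmap]; exact hf)]

lemma integral_comp_snd {Ω₁ Ω₂ : Type*} [MeasurableSpace Ω₁] [MeasurableSpace Ω₂]
    (μ1 : Measure Ω₁) (μ2 : Measure Ω₂) [IsProbabilityMeasure μ1] [IsProbabilityMeasure μ2]
    {f : Ω₂ → ℝ} (hf : AEStronglyMeasurable f μ2) :
    ∫ ω, f ω.2 ∂(μ1.prod μ2) = ∫ y, f y ∂μ2 := by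
  have hmap : Measure.map Prod.snd (μ1.prod μ2) = μ2 := by
    rw [Measure.map_snd_prod]; simp
  conv_rhs => rw [← hmap]
  rw [integral_map measurable_snd.aemeasurable (by rw [hmap]; exact hf)]

lemma five_sq (a b c d e : ℝ) :
    (a + b + c + d + e) ^ 2 ≤ 5 * (a ^ 2 + b ^ 2 + c ^ 2 + d ^ 2 + e ^ 2) := by
  have h := sq_sum_le_card_mul_sum_sq (s := (Finset.univ : Finset (Fin 5)))
    (f := ![a, b, c, d, e])
  simpa [Fin.sum_univ_five] using h

lemma main_var_bound {X H : Type*} [MeasurableSpace X]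
    [NormedAddCommGroup H] [InnerProductSpace ℝ H] [CompleteSpace H]
    [SecondCountableTopology H] [MeasurableSpace H] [BorelSpace H]
    (φ : X → H) (k : X → X → ℝ) (κ : ℝ) (p q : Measure X)
    [IsProbabilityMeasure p] [IsProbabilityMeasure q] (n m : ℕ) (c : ℝ)
    (hφ : Measurable φ) (hk : ∀ x y, k x y = ⟪φ x, φ y⟫)
    (hκ : ∀ x, ‖φ x‖ ^ 2 ≤ κ)
    (hnm : (n : ℝ) ≤ m) (hmc : (m : ℝ) ≤ c * n) :
    variance (fun ω : (Fin n → X) × (Fin m → X) => mmdSqHat k ω.1 ω.2)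
      ((Measure.pi fun _ : Fin n => p).prod (Measure.pi fun _ : Fin m => q))
      ≤ 1600 * (κ * mmdSq k p q / n + κ ^ 2 / n ^ 2) := by
  set P := Measure.pi fun _ : Fin n => p with hP
  set Q := Measure.pi fun _ : Fin m => q with hQ
  set μ := P.prod Q with hμdef
  set fv : (Fin n → X) × (Fin m → X) → ℝ := fun ω => mmdSqHat k ω.1 ω.2 with hfv
  have hXne : Nonempty X := by
    by_contra hemp
    rw [not_nonempty_iff] at hemp
    have h1 : p Set.univ = 1 := measure_univ
    rw [Set.univ_eq_empty_iff.mpr hemp, measure_empty] at h1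
    exact zero_ne_one h1
  have hκ0 : 0 ≤ κ := le_trans (sq_nonneg _) (hκ (Classical.arbitrary X))
  set s := Real.sqrt κ with hs
  have hs0 : 0 ≤ s := Real.sqrt_nonneg κ
  have hss : s * s = κ := Real.mul_self_sqrt hκ0
  have hns : ∀ u, ‖φ u‖ ≤ s := by
    intro u
    rw [hs, ← Real.sqrt_sq (norm_nonneg (φ u))]
    exact Real.sqrt_le_sqrt (hκ u)
  have hkb : ∀ u v, |k u v| ≤ κ := by
    intro u v
    rw [hk]
    refine le_trans (abs_real_inner_le_norm _ _) ?_
    rw [← hss]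
    exact mul_le_mul (hns u) (hns v) (norm_nonneg _) hs0
  have hφm : AEStronglyMeasurable φ p := hφ.stronglyMeasurable.aestronglyMeasurable
  have hφmq : AEStronglyMeasurable φ q := hφ.stronglyMeasurable.aestronglyMeasurable
  have hφip : Integrable φ p := (integrable_const s).mono' hφm (ae_of_all _ hns)
  have hφiq : Integrable φ q := (integrable_const s).mono' hφmq (ae_of_all _ hns)
  set μp := ∫ u, φ u ∂p with hμp
  set μq := ∫ u, φ u ∂q with hμq
  set δ := μp - μq with hδ
  have hμpn : ‖μp‖ ≤ s := by
    refine le_trans (norm_integral_le_integral_norm φ) ?_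
    calc ∫ u, ‖φ u‖ ∂p ≤ ∫ _u, s ∂p := integral_mono hφip.norm (integrable_const s) hns
      _ = s := by simp
  have hμqn : ‖μq‖ ≤ s := by
    refine le_trans (norm_integral_le_integral_norm φ) ?_
    calc ∫ u, ‖φ u‖ ∂q ≤ ∫ _u, s ∂q := integral_mono hφiq.norm (integrable_const s) hns
      _ = s := by simp
  have hψb : ∀ u, ‖φ u - μp‖ ≤ 2 * s := fun u =>
    le_trans (norm_sub_le _ _) (by linarith [hns u, hμpn])
  have hχb : ∀ u, ‖φ u - μq‖ ≤ 2 * s := fun u =>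
    le_trans (norm_sub_le _ _) (by linarith [hns u, hμqn])
  have hψi : Integrable (fun u => φ u - μp) p := hφip.sub (integrable_const μp)
  have hχi : Integrable (fun u => φ u - μq) q := hφiq.sub (integrable_const μq)
  have hψ0 : ∫ u, (φ u - μp) ∂p = 0 := by
    rw [integral_sub hφip (integrable_const μp), integral_const]
    simp [hμp]
  have hχ0 : ∫ u, (φ u - μq) ∂q = 0 := by
    rw [integral_sub hφiq (integrable_const μq), integral_const]
    simp [hμq]
  set Dv := (⟪δ, δ⟫ : ℝ) with hDv
  have hD : mmdSq k p q = Dv := by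
    have h1 : ∫ x, ∫ x', k x x' ∂p ∂p = ⟪μp, μp⟫ := by
      have hin : ∀ x, ∫ x', k x x' ∂p = ⟪φ x, μp⟫ := by
        intro x
        simp_rw [hk]
        exact integral_inner hφip (φ x)
      rw [integral_congr_ae (ae_of_all _ hin)]
      have h2 : ∀ x, (⟪φ x, μp⟫ : ℝ) = ⟪μp, φ x⟫ := fun x => real_inner_comm _ _
      rw [integral_congr_ae (ae_of_all _ h2)]
      exact integral_inner hφip μp
    have h2 : ∫ y, ∫ y', k y y' ∂q ∂q = ⟪μq, μq⟫ := by
      have hin : ∀ y, ∫ y', k y y' ∂q = ⟪φ y, μq⟫ := by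
        intro y
        simp_rw [hk]
        exact integral_inner hφiq (φ y)
      rw [integral_congr_ae (ae_of_all _ hin)]
      have h2' : ∀ y, (⟪φ y, μq⟫ : ℝ) = ⟪μq, φ y⟫ := fun y => real_inner_comm _ _
      rw [integral_congr_ae (ae_of_all _ h2')]
      exact integral_inner hφiq μq
    have h3 : ∫ x, ∫ y, k x y ∂q ∂p = ⟪μq, μp⟫ := by
      have hin : ∀ x, ∫ y, k x y ∂q = ⟪φ x, μq⟫ := by
        intro x
        simp_rw [hk]
        exact integral_inner hφiq (φ x)
      rw [integral_congr_ae (ae_of_all _ hin)]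
      have h2' : ∀ x, (⟪φ x, μq⟫ : ℝ) = ⟪μq, φ x⟫ := fun x => real_inner_comm _ _
      rw [integral_congr_ae (ae_of_all _ h2')]
      exact integral_inner hφip μq
    rw [mmdSq, h1, h2, h3, hDv, hδ, inner_sub_left, inner_sub_right, inner_sub_right,
      real_inner_comm μq μp]
    ring
  have hD0 : (0:ℝ) ≤ Dv := real_inner_self_nonneg
  have hDnorm : Dv = ‖δ‖ ^ 2 := real_inner_self_eq_norm_sq δ
  -- measurability of the statistic
  have hkm2 : Measurable fun uv : X × X => k uv.1 uv.2 := by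
    have he : (fun uv : X × X => k uv.1 uv.2) = fun uv : X × X => (⟪φ uv.1, φ uv.2⟫ : ℝ) :=
      funext fun uv => hk _ _
    rw [he]
    exact (hφ.comp measurable_fst).inner (hφ.comp measurable_snd)
  have hS1m : Measurable fun z : Fin n → X =>
      ∑ i : Fin n, ∑ i' : Fin n, if i ≠ i' then k (z i) (z i') else 0 := by
    refine Finset.measurable_sum _ fun i _ => Finset.measurable_sum _ fun i' _ => ?_
    by_cases hii : i ≠ i'
    · have he : (fun z : Fin n → X => if i ≠ i' then k (z i) (z i') else 0)
          = fun z => k (z i) (z i') := funext fun z => if_pos hii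
      rw [he]
      have hpair : Measurable fun z : Fin n → X => (z i, z i') :=
        (measurable_pi_apply _).prodMk (measurable_pi_apply _)
      exact hkm2.comp hpair
    · have he : (fun z : Fin n → X => if i ≠ i' then k (z i) (z i') else 0)
          = fun _ => 0 := funext fun z => if_neg hii
      rw [he]; exact measurable_const
  have hS2m : Measurable fun z : Fin m → X =>
      ∑ j : Fin m, ∑ j' : Fin m, if j ≠ j' then k (z j) (z j') else 0 := by
    refine Finset.measurable_sum _ fun j _ => Finset.measurable_sum _ fun j' _ => ?_
    by_cases hjj : j ≠ j'
    · have he : (fun z : Fin m → X => if j ≠ j' then k (z j) (z j') else 0)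
          = fun z => k (z j) (z j') := funext fun z => if_pos hjj
      rw [he]
      have hpair : Measurable fun z : Fin m → X => (z j, z j') :=
        (measurable_pi_apply _).prodMk (measurable_pi_apply _)
      exact hkm2.comp hpair
    · have he : (fun z : Fin m → X => if j ≠ j' then k (z j) (z j') else 0)
          = fun _ => 0 := funext fun z => if_neg hjj
      rw [he]; exact measurable_const
  have hS3m : Measurable fun ω : (Fin n → X) × (Fin m → X) =>
      ∑ i : Fin n, ∑ j : Fin m, k (ω.1 i) (ω.2 j) := by
    refine Finset.measurable_sum _ fun i _ => Finset.measurable_sum _ fun j _ => ?_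
    have hpair : Measurable fun ω : (Fin n → X) × (Fin m → X) => (ω.1 i, ω.2 j) :=
      ((measurable_pi_apply _).comp measurable_fst).prodMk
        ((measurable_pi_apply _).comp measurable_snd)
    exact hkm2.comp hpair
  have hfvm : Measurable fv := by
    rw [hfv]
    unfold mmdSqHat
    exact ((measurable_const.mul (hS1m.comp measurable_fst)).add
      (measurable_const.mul (hS2m.comp measurable_snd))).sub
      (measurable_const.mul hS3m)
  -- uniform bound on the statistic
  have hcoefb : ∀ (N : ℕ) (z : Fin N → X),
      |(1 / ((N : ℝ) * ((N : ℝ) - 1))) * ∑ i : Fin N, ∑ i' : Fin N,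
          if i ≠ i' then k (z i) (z i') else 0| ≤ 2 * κ := by
    intro N z
    rcases Nat.lt_or_ge N 2 with hN | hN
    · interval_cases N
      · norm_num
        linarith
      · norm_num
        linarith
    · have hNR : (2:ℝ) ≤ (N : ℝ) := by exact_mod_cast hN
      have hpos : (0:ℝ) < 1 / ((N : ℝ) * ((N : ℝ) - 1)) := by
        have : (0:ℝ) < (N : ℝ) * ((N : ℝ) - 1) := by nlinarith
        positivity
      rw [abs_mul, abs_of_pos hpos]
      have h2 := abs_ite_sum_bound (fun i i' => k (z i) (z i')) κ (fun i j => hkb _ _)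
      calc 1 / ((N : ℝ) * ((N : ℝ) - 1))
            * |∑ i : Fin N, ∑ i' : Fin N, if i ≠ i' then k (z i) (z i') else 0|
          ≤ 1 / ((N : ℝ) * ((N : ℝ) - 1)) * ((N : ℝ) * ((N : ℝ) - 1) * κ) :=
            mul_le_mul_of_nonneg_left h2 (le_of_lt hpos)
        _ = κ := by
              have hne : ((N:ℝ) * ((N:ℝ) - 1)) ≠ 0 := by nlinarith
              rw [← mul_assoc, one_div_mul_cancel hne, one_mul]
        _ ≤ 2 * κ := by linarith
  have hT3b : ∀ ω : (Fin n → X) × (Fin m → X),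
      |(2 / ((m : ℝ) * (n : ℝ))) * ∑ i : Fin n, ∑ j : Fin m, k (ω.1 i) (ω.2 j)| ≤ 2 * κ := by
    intro ω
    rcases Nat.eq_zero_or_pos n with hn0 | hn0
    · have hz : ∀ i : Fin n, False := fun i => by rw [hn0] at i; exact i.elim0
      have : (∑ i : Fin n, ∑ j : Fin m, k (ω.1 i) (ω.2 j)) = 0 := by
        apply Finset.sum_eq_zero; intro i _; exact absurd (hz i) not_false
      rw [this, mul_zero, abs_zero]; linarith
    · rcases Nat.eq_zero_or_pos m with hm0 | hm0
      · have : (∑ i : Fin n, ∑ j : Fin m, k (ω.1 i) (ω.2 j)) = 0 := by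
          apply Finset.sum_eq_zero; intro i _
          apply Finset.sum_eq_zero; intro j _
          exact absurd (by rw [hm0] at j; exact j.elim0) not_false
        rw [this, mul_zero, abs_zero]; linarith
      · have hnR : (1:ℝ) ≤ (n : ℝ) := by exact_mod_cast hn0
        have hmR : (1:ℝ) ≤ (m : ℝ) := by exact_mod_cast hm0
        have hpos : (0:ℝ) < 2 / ((m : ℝ) * (n : ℝ)) := by
          have : (0:ℝ) < (m : ℝ) * (n : ℝ) := by nlinarith
          positivity
        rw [abs_mul, abs_of_pos hpos]
        have h2 := abs_sum_sum_bound (fun i j => k (ω.1 i) (ω.2 j)) κ hκ0 (fun i j => hkb _ _)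
        calc 2 / ((m : ℝ) * (n : ℝ)) * |∑ i : Fin n, ∑ j : Fin m, k (ω.1 i) (ω.2 j)|
            ≤ 2 / ((m : ℝ) * (n : ℝ)) * ((n : ℝ) * (m : ℝ) * κ) :=
              mul_le_mul_of_nonneg_left h2 (le_of_lt hpos)
          _ = 2 * κ := by
              field_simp
          _ ≤ 2 * κ := le_refl _
  have habc : ∀ a b c : ℝ, |a + b - c| ≤ |a| + |b| + |c| := by
    intro a b c
    have h := abs_add_le (a + b) (-c)
    rw [abs_neg] at h
    have h2 := abs_add_le a b
    calc |a + b - c| = |a + b + -c| := by rw [sub_eq_add_neg]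
      _ ≤ |a + b| + |c| := h
      _ ≤ |a| + |b| + |c| := by linarith
  have hfvb : ∀ ω, |fv ω| ≤ 6 * κ := by
    intro ω
    have h1 := hcoefb n ω.1
    have h2 := hcoefb m ω.2
    have h3 := hT3b ω
    have : fv ω = (1 / ((n : ℝ) * ((n : ℝ) - 1))) * (∑ i : Fin n, ∑ i' : Fin n,
          if i ≠ i' then k (ω.1 i) (ω.1 i') else 0)
        + (1 / ((m : ℝ) * ((m : ℝ) - 1))) * (∑ j : Fin m, ∑ j' : Fin m,
          if j ≠ j' then k (ω.2 j) (ω.2 j') else 0)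
        - (2 / ((m : ℝ) * (n : ℝ))) * (∑ i : Fin n, ∑ j : Fin m, k (ω.1 i) (ω.2 j)) := rfl
    rw [this]
    refine le_trans (habc _ _ _) ?_
    linarith
  -- variance bounded by centred second moment
  have hfvae : AEStronglyMeasurable fv μ := hfvm.aestronglyMeasurable
  have hmem2 : MemLp fv 2 μ := MemLp.of_bound hfvae (6 * κ)
    (ae_of_all _ fun ω => by simpa [Real.norm_eq_abs] using hfvb ω)
  have hfvint : Integrable fv μ := hmem2.integrable one_le_two
  have hfvsq : Integrable (fun ω => fv ω ^ 2) μ := hmem2.integrable_sq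
  have hvar : variance fv μ ≤ ∫ ω, (fv ω - Dv) ^ 2 ∂μ := by
    rw [variance_eq_sub hmem2]
    have hexp : ∫ ω, (fv ω - Dv) ^ 2 ∂μ
        = (∫ ω, fv ω ^ 2 ∂μ) - (2 * Dv) * (∫ ω, fv ω ∂μ) + Dv ^ 2 := by
      have hpt : ∀ ω, (fv ω - Dv) ^ 2 = (fv ω ^ 2 - (2 * Dv) * fv ω) + Dv ^ 2 := by
        intro ω; ring
      have hint1 : Integrable (fun ω => fv ω ^ 2 - (2 * Dv) * fv ω) μ :=
        hfvsq.sub (hfvint.const_mul (2 * Dv))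
      have hint2 : Integrable (fun ω => (2 * Dv) * fv ω) μ := hfvint.const_mul (2 * Dv)
      rw [integral_congr_ae (ae_of_all _ hpt),
        integral_add hint1 (integrable_const (Dv ^ 2)),
        integral_sub hfvsq hint2, integral_const_mul, integral_const]
      simp
    rw [hexp]
    have h1 : (∫ ω, (fv ^ 2) ω ∂μ) = ∫ ω, fv ω ^ 2 ∂μ := by simp [Pi.pow_apply]
    rw [h1]
    nlinarith [sq_nonneg ((∫ ω, fv ω ∂μ) - Dv)]
  rcases Nat.lt_or_ge n 2 with hn2 | hn2
  · -- small n
    have hvar2 : variance fv μ ≤ ∫ ω, fv ω ^ 2 ∂μ := by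
      calc variance fv μ ≤ ∫ ω, (fv ^ 2) ω ∂μ := variance_le_expectation_sq hfvae
        _ = ∫ ω, fv ω ^ 2 ∂μ := by simp [Pi.pow_apply]
    interval_cases n
    · -- n = 0 forces m = 0
      have hm0 : m = 0 := by
        have h1 : (m:ℝ) ≤ 0 := by simpa using hmc
        have h2 : (0:ℝ) ≤ (m:ℝ) := Nat.cast_nonneg m
        exact_mod_cast le_antisymm h1 h2
      subst hm0
      have hz : ∀ ω : (Fin 0 → X) × (Fin 0 → X), fv ω ^ 2 = 0 := by
        intro ω
        have : fv ω = 0 := by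
          rw [hfv]
          unfold mmdSqHat
          simp
        rw [this]
        norm_num
      calc variance fv μ ≤ ∫ ω, fv ω ^ 2 ∂μ := hvar2
        _ = 0 := by
            rw [integral_congr_ae (ae_of_all _ hz)]
            exact integral_zero _ _
        _ ≤ 1600 * (κ * mmdSq k p q / (0:ℕ) + κ ^ 2 / (0:ℕ) ^ 2) := by
            norm_num
    · -- n = 1
      have hsq6 : ∀ ω, fv ω ^ 2 ≤ (6 * κ) ^ 2 := by
        intro ω
        have h := abs_le.mp (hfvb ω)
        exact sq_le_sq' h.1 h.2
      calc variance fv μ ≤ ∫ ω, fv ω ^ 2 ∂μ := hvar2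
        _ ≤ ∫ _ω, (6 * κ) ^ 2 ∂μ :=
            integral_mono hfvsq (integrable_const _) hsq6
        _ = (6 * κ) ^ 2 := by simp
        _ ≤ 1600 * (κ * mmdSq k p q / (1:ℕ) + κ ^ 2 / (1:ℕ) ^ 2) := by
            rw [hD]
            push_cast
            have h1 : 0 ≤ κ * Dv := mul_nonneg hκ0 hD0
            nlinarith [sq_nonneg κ]
  · -- main branch : 2 ≤ n ≤ m
    have hm2 : 2 ≤ m := by
      have h1 : (2:ℝ) ≤ (n:ℝ) := by exact_mod_cast hn2
      have h2 : (2:ℝ) ≤ (m:ℝ) := le_trans h1 hnm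
      exact_mod_cast h2
    have hnR : (2:ℝ) ≤ (n:ℝ) := by exact_mod_cast hn2
    have hmR : (2:ℝ) ≤ (m:ℝ) := by exact_mod_cast hm2
    have hN0 : ((n:ℝ)) ≠ 0 := by linarith
    have hM0 : ((m:ℝ)) ≠ 0 := by linarith
    have hN1pos : (0:ℝ) < (n:ℝ) - 1 := by linarith
    have hM1pos : (0:ℝ) < (m:ℝ) - 1 := by linarith
    -- centred single-sample functions
    set g1 : X → ℝ := fun u => ⟪φ u - μp, δ⟫ with hg1
    set g2 : X → ℝ := fun u => ⟪φ u - μq, δ⟫ with hg2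
    have hg1m : Measurable g1 := (hφ.sub measurable_const).inner measurable_const
    have hg2m : Measurable g2 := (hφ.sub measurable_const).inner measurable_const
    have hg1b : ∀ u, |g1 u| ≤ 2 * s * ‖δ‖ := fun u => le_trans (abs_real_inner_le_norm _ _)
      (mul_le_mul_of_nonneg_right (hψb u) (norm_nonneg δ))
    have hg2b : ∀ u, |g2 u| ≤ 2 * s * ‖δ‖ := fun u => le_trans (abs_real_inner_le_norm _ _)
      (mul_le_mul_of_nonneg_right (hχb u) (norm_nonneg δ))
    have hg10 : ∫ u, g1 u ∂p = 0 := by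
      have hcomm : g1 = fun u => (⟪δ, φ u - μp⟫ : ℝ) := funext fun u => real_inner_comm _ _
      rw [hcomm, integral_inner hψi, hψ0, inner_zero_right]
    have hg20 : ∫ u, g2 u ∂q = 0 := by
      have hcomm : g2 = fun u => (⟪δ, φ u - μq⟫ : ℝ) := funext fun u => real_inner_comm _ _
      rw [hcomm, integral_inner hχi, hχ0, inner_zero_right]
    -- centred kernels
    set h3k : X → X → ℝ := fun u v => ⟪φ u - μp, φ v - μp⟫ with hh3k
    set h4k : X → X → ℝ := fun u v => ⟪φ u - μq, φ v - μq⟫ with hh4k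
    set w5 : X → X → ℝ := fun u v => ⟪φ u - μp, φ v - μq⟫ with hw5
    have h3m : Measurable fun uv : X × X => h3k uv.1 uv.2 :=
      ((hφ.comp measurable_fst).sub measurable_const).inner
        ((hφ.comp measurable_snd).sub measurable_const)
    have h4m : Measurable fun uv : X × X => h4k uv.1 uv.2 :=
      ((hφ.comp measurable_fst).sub measurable_const).inner
        ((hφ.comp measurable_snd).sub measurable_const)
    have w5m : Measurable fun uv : X × X => w5 uv.1 uv.2 :=
      ((hφ.comp measurable_fst).sub measurable_const).inner
        ((hφ.comp measurable_snd).sub measurable_const)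
    have h3b : ∀ u v, |h3k u v| ≤ 4 * κ := by
      intro u v
      refine le_trans (abs_real_inner_le_norm _ _) ?_
      calc ‖φ u - μp‖ * ‖φ v - μp‖ ≤ (2*s) * (2*s) :=
            mul_le_mul (hψb u) (hψb v) (norm_nonneg _) (by positivity)
        _ = 4 * κ := by rw [← hss]; ring
    have h4b : ∀ u v, |h4k u v| ≤ 4 * κ := by
      intro u v
      refine le_trans (abs_real_inner_le_norm _ _) ?_
      calc ‖φ u - μq‖ * ‖φ v - μq‖ ≤ (2*s) * (2*s) :=
            mul_le_mul (hχb u) (hχb v) (norm_nonneg _) (by positivity)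
        _ = 4 * κ := by rw [← hss]; ring
    have w5b : ∀ u v, |w5 u v| ≤ 4 * κ := by
      intro u v
      refine le_trans (abs_real_inner_le_norm _ _) ?_
      calc ‖φ u - μp‖ * ‖φ v - μq‖ ≤ (2*s) * (2*s) :=
            mul_le_mul (hψb u) (hχb v) (norm_nonneg _) (by positivity)
        _ = 4 * κ := by rw [← hss]; ring
    have h3row : ∀ u, ∫ v, h3k u v ∂p = 0 := by
      intro u
      calc ∫ v, h3k u v ∂p = ⟪φ u - μp, ∫ v, (φ v - μp) ∂p⟫ := integral_inner hψi _
        _ = 0 := by rw [hψ0, inner_zero_right]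
    have h3col : ∀ v, ∫ u, h3k u v ∂p = 0 := by
      intro v
      have hcomm : (fun u => h3k u v) = fun u => (⟪φ v - μp, φ u - μp⟫ : ℝ) :=
        funext fun u => real_inner_comm _ _
      rw [hcomm]
      calc ∫ u, (⟪φ v - μp, φ u - μp⟫ : ℝ) ∂p
          = ⟪φ v - μp, ∫ u, (φ u - μp) ∂p⟫ := integral_inner hψi _
        _ = 0 := by rw [hψ0, inner_zero_right]
    have h4row : ∀ u, ∫ v, h4k u v ∂q = 0 := by
      intro u
      calc ∫ v, h4k u v ∂q = ⟪φ u - μq, ∫ v, (φ v - μq) ∂q⟫ := integral_inner hχi _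
        _ = 0 := by rw [hχ0, inner_zero_right]
    have h4col : ∀ v, ∫ u, h4k u v ∂q = 0 := by
      intro v
      have hcomm : (fun u => h4k u v) = fun u => (⟪φ v - μq, φ u - μq⟫ : ℝ) :=
        funext fun u => real_inner_comm _ _
      rw [hcomm]
      calc ∫ u, (⟪φ v - μq, φ u - μq⟫ : ℝ) ∂q
          = ⟪φ v - μq, ∫ u, (φ u - μq) ∂q⟫ := integral_inner hχi _
        _ = 0 := by rw [hχ0, inner_zero_right]
    have w5row : ∀ u, ∫ v, w5 u v ∂q = 0 := by
      intro u
      calc ∫ v, w5 u v ∂q = ⟪φ u - μp, ∫ v, (φ v - μq) ∂q⟫ := integral_inner hχi _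
        _ = 0 := by rw [hχ0, inner_zero_right]
    have w5col : ∀ v, ∫ u, w5 u v ∂p = 0 := by
      intro v
      have hcomm : (fun u => w5 u v) = fun u => (⟪φ v - μq, φ u - μp⟫ : ℝ) :=
        funext fun u => real_inner_comm _ _
      rw [hcomm]
      calc ∫ u, (⟪φ v - μq, φ u - μp⟫ : ℝ) ∂p
          = ⟪φ v - μq, ∫ u, (φ u - μp) ∂p⟫ := integral_inner hψi _
        _ = 0 := by rw [hψ0, inner_zero_right]
    -- moment bounds
    have hmom1 : ∫ z, (∑ i, g1 (z i)) ^ 2 ∂P ≤ (n:ℝ) * (2 * s * ‖δ‖) ^ 2 :=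
      moment_single p hg1m (by positivity) hg1b hg10
    have hmom2 : ∫ z, (∑ j, g2 (z j)) ^ 2 ∂Q ≤ (m:ℝ) * (2 * s * ‖δ‖) ^ 2 :=
      moment_single q hg2m (by positivity) hg2b hg20
    have hmom3 : ∫ z, (∑ i, ∑ i', if i ≠ i' then h3k (z i) (z i') else 0) ^ 2 ∂P
        ≤ 2 * (n:ℝ) ^ 2 * (4 * κ) ^ 2 :=
      moment_pair p h3m (by positivity) h3b h3row h3col
    have hmom4 : ∫ z, (∑ j, ∑ j', if j ≠ j' then h4k (z j) (z j') else 0) ^ 2 ∂Q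
        ≤ 2 * (m:ℝ) ^ 2 * (4 * κ) ^ 2 :=
      moment_pair q h4m (by positivity) h4b h4row h4col
    have hmom5 : ∫ ω, (∑ i : Fin n, ∑ j : Fin m, w5 (ω.1 i) (ω.2 j)) ^ 2 ∂μ
        ≤ ((n:ℝ) * (m:ℝ)) * (4 * κ) ^ 2 :=
      moment_cross p q w5m (by positivity) w5b w5row w5col
    -- the five centred terms
    set F1 : (Fin n → X) × (Fin m → X) → ℝ :=
      fun ω => (2 / (n : ℝ)) * (∑ i, g1 (ω.1 i)) with hF1
    set F2 : (Fin n → X) × (Fin m → X) → ℝ :=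
      fun ω => -((2 / (m : ℝ)) * (∑ j, g2 (ω.2 j))) with hF2
    set F3 : (Fin n → X) × (Fin m → X) → ℝ :=
      fun ω => (1 / ((n : ℝ) * ((n : ℝ) - 1))) * (∑ i : Fin n, ∑ i' : Fin n,
        if i ≠ i' then h3k (ω.1 i) (ω.1 i') else 0) with hF3
    set F4 : (Fin n → X) × (Fin m → X) → ℝ :=
      fun ω => (1 / ((m : ℝ) * ((m : ℝ) - 1))) * (∑ j : Fin m, ∑ j' : Fin m,
        if j ≠ j' then h4k (ω.2 j) (ω.2 j') else 0) with hF4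
    set F5 : (Fin n → X) × (Fin m → X) → ℝ :=
      fun ω => -((2 / ((m : ℝ) * (n : ℝ))) * (∑ i : Fin n, ∑ j : Fin m,
        w5 (ω.1 i) (ω.2 j))) with hF5
    have hident : ∀ ω : (Fin n → X) × (Fin m → X),
        fv ω - Dv = F1 ω + F2 ω + F3 ω + F4 ω + F5 ω := by
      intro ω
      exact mmd_identity φ k hk μp μq hn2 hm2 ω.1 ω.2
    -- measurability of the pieces
    have hGm1 : Measurable fun z : Fin n → X => ∑ i, g1 (z i) :=
      Finset.measurable_sum _ fun i _ => hg1m.comp (measurable_pi_apply i)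
    have hGm2 : Measurable fun z : Fin m → X => ∑ j, g2 (z j) :=
      Finset.measurable_sum _ fun j _ => hg2m.comp (measurable_pi_apply j)
    have hGm3 : Measurable fun z : Fin n → X =>
        ∑ i : Fin n, ∑ i' : Fin n, if i ≠ i' then h3k (z i) (z i') else 0 := by
      refine Finset.measurable_sum _ fun i _ => Finset.measurable_sum _ fun i' _ => ?_
      by_cases hii : i ≠ i'
      · have he : (fun z : Fin n → X => if i ≠ i' then h3k (z i) (z i') else 0)
            = fun z => h3k (z i) (z i') := funext fun z => if_pos hii
        rw [he]
        have hpair : Measurable fun z : Fin n → X => (z i, z i') :=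
          (measurable_pi_apply _).prodMk (measurable_pi_apply _)
        exact h3m.comp hpair
      · have he : (fun z : Fin n → X => if i ≠ i' then h3k (z i) (z i') else 0)
            = fun _ => 0 := funext fun z => if_neg hii
        rw [he]; exact measurable_const
    have hGm4 : Measurable fun z : Fin m → X =>
        ∑ j : Fin m, ∑ j' : Fin m, if j ≠ j' then h4k (z j) (z j') else 0 := by
      refine Finset.measurable_sum _ fun j _ => Finset.measurable_sum _ fun j' _ => ?_
      by_cases hjj : j ≠ j'
      · have he : (fun z : Fin m → X => if j ≠ j' then h4k (z j) (z j') else 0)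
            = fun z => h4k (z j) (z j') := funext fun z => if_pos hjj
        rw [he]
        have hpair : Measurable fun z : Fin m → X => (z j, z j') :=
          (measurable_pi_apply _).prodMk (measurable_pi_apply _)
        exact h4m.comp hpair
      · have he : (fun z : Fin m → X => if j ≠ j' then h4k (z j) (z j') else 0)
            = fun _ => 0 := funext fun z => if_neg hjj
        rw [he]; exact measurable_const
    have hGm5 : Measurable fun ω : (Fin n → X) × (Fin m → X) =>
        ∑ i : Fin n, ∑ j : Fin m, w5 (ω.1 i) (ω.2 j) := by
      refine Finset.measurable_sum _ fun i _ => Finset.measurable_sum _ fun j _ => ?_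
      have hpair : Measurable fun ω : (Fin n → X) × (Fin m → X) => (ω.1 i, ω.2 j) :=
        ((measurable_pi_apply _).comp measurable_fst).prodMk
          ((measurable_pi_apply _).comp measurable_snd)
      exact w5m.comp hpair
    have hF1m : Measurable F1 := by
      rw [hF1]; exact measurable_const.mul (hGm1.comp measurable_fst)
    have hF2m : Measurable F2 := by
      rw [hF2]; exact (measurable_const.mul (hGm2.comp measurable_snd)).neg
    have hF3m : Measurable F3 := by
      rw [hF3]; exact measurable_const.mul (hGm3.comp measurable_fst)
    have hF4m : Measurable F4 := by
      rw [hF4]; exact measurable_const.mul (hGm4.comp measurable_snd)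
    have hF5m : Measurable F5 := by
      rw [hF5]; exact (measurable_const.mul hGm5).neg
    -- crude bounds for integrability
    have hF1b : ∀ ω, |F1 ω| ≤ |2 / (n:ℝ)| * ((n:ℝ) * (2 * s * ‖δ‖)) := by
      intro ω
      rw [hF1]
      dsimp only
      rw [abs_mul]
      exact mul_le_mul_of_nonneg_left (abs_sum_bound _ _ fun i => hg1b _) (abs_nonneg _)
    have hF2b : ∀ ω, |F2 ω| ≤ |2 / (m:ℝ)| * ((m:ℝ) * (2 * s * ‖δ‖)) := by
      intro ω
      rw [hF2]
      dsimp only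
      rw [abs_neg, abs_mul]
      exact mul_le_mul_of_nonneg_left (abs_sum_bound _ _ fun j => hg2b _) (abs_nonneg _)
    have hF3b : ∀ ω, |F3 ω| ≤ |1 / ((n:ℝ) * ((n:ℝ) - 1))| * ((n:ℝ) * ((n:ℝ) - 1) * (4 * κ)) := by
      intro ω
      rw [hF3]
      dsimp only
      rw [abs_mul]
      exact mul_le_mul_of_nonneg_left
        (abs_ite_sum_bound (fun i i' => h3k (ω.1 i) (ω.1 i')) (4 * κ) fun i j => h3b _ _)
        (abs_nonneg _)
    have hF4b : ∀ ω, |F4 ω| ≤ |1 / ((m:ℝ) * ((m:ℝ) - 1))| * ((m:ℝ) * ((m:ℝ) - 1) * (4 * κ)) := by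
      intro ω
      rw [hF4]
      dsimp only
      rw [abs_mul]
      exact mul_le_mul_of_nonneg_left
        (abs_ite_sum_bound (fun j j' => h4k (ω.2 j) (ω.2 j')) (4 * κ) fun i j => h4b _ _)
        (abs_nonneg _)
    have hF5b : ∀ ω, |F5 ω| ≤ |2 / ((m:ℝ) * (n:ℝ))| * ((n:ℝ) * (m:ℝ) * (4 * κ)) := by
      intro ω
      rw [hF5]
      dsimp only
      rw [abs_neg, abs_mul]
      exact mul_le_mul_of_nonneg_left
        (abs_sum_sum_bound (fun i j => w5 (ω.1 i) (ω.2 j)) (4 * κ) (by positivity)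
          fun i j => w5b _ _)
        (abs_nonneg _)
    have hsqb : ∀ (f : (Fin n → X) × (Fin m → X) → ℝ) (K : ℝ), (∀ ω, |f ω| ≤ K)
        → ∀ ω, |f ω ^ 2| ≤ K ^ 2 := by
      intro f K hb ω
      rw [abs_pow]
      exact pow_le_pow_left₀ (abs_nonneg _) (hb ω) 2
    have hF1int : Integrable (fun ω => F1 ω ^ 2) μ :=
      bdd_integrable (hF1m.pow_const 2).aestronglyMeasurable (hsqb F1 _ hF1b)
    have hF2int : Integrable (fun ω => F2 ω ^ 2) μ :=
      bdd_integrable (hF2m.pow_const 2).aestronglyMeasurable (hsqb F2 _ hF2b)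
    have hF3int : Integrable (fun ω => F3 ω ^ 2) μ :=
      bdd_integrable (hF3m.pow_const 2).aestronglyMeasurable (hsqb F3 _ hF3b)
    have hF4int : Integrable (fun ω => F4 ω ^ 2) μ :=
      bdd_integrable (hF4m.pow_const 2).aestronglyMeasurable (hsqb F4 _ hF4b)
    have hF5int : Integrable (fun ω => F5 ω ^ 2) μ :=
      bdd_integrable (hF5m.pow_const 2).aestronglyMeasurable (hsqb F5 _ hF5b)
    have habs_sub : ∀ a b : ℝ, |a - b| ≤ |a| + |b| := by
      intro a b
      rw [sub_eq_add_neg]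
      refine le_trans (abs_add_le _ _) ?_
      rw [abs_neg]
    have hfvDint : Integrable (fun ω => (fv ω - Dv) ^ 2) μ :=
      bdd_integrable ((hfvm.sub measurable_const).pow_const 2).aestronglyMeasurable
        (hsqb (fun ω => fv ω - Dv) (6 * κ + |Dv|)
          (fun ω => le_trans (habs_sub _ _) (by linarith [hfvb ω, le_abs_self Dv])))
    -- bounds on the five second moments
    have hI1 : ∫ ω, F1 ω ^ 2 ∂μ ≤ 16 * (κ * Dv / (n:ℝ)) := by
      have hpt : ∀ ω : (Fin n → X) × (Fin m → X),
          F1 ω ^ 2 = (2 / (n:ℝ)) ^ 2 * ((fun z : Fin n → X => (∑ i, g1 (z i)) ^ 2) ω.1) := by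
        intro ω; rw [hF1]; dsimp only; ring
      rw [integral_congr_ae (ae_of_all _ hpt), integral_const_mul,
        integral_comp_fst P Q (f := fun z : Fin n → X => (∑ i, g1 (z i)) ^ 2)
          (hGm1.pow_const 2).aestronglyMeasurable]
      calc (2 / (n:ℝ)) ^ 2 * ∫ z, (∑ i, g1 (z i)) ^ 2 ∂P
          ≤ (2 / (n:ℝ)) ^ 2 * ((n:ℝ) * (2 * s * ‖δ‖) ^ 2) :=
            mul_le_mul_of_nonneg_left hmom1 (by positivity)
        _ = 16 * (κ * Dv / (n:ℝ)) := by
            rw [hDnorm, ← hss]; field_simp; ring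
    have hI2 : ∫ ω, F2 ω ^ 2 ∂μ ≤ 16 * (κ * Dv / (n:ℝ)) := by
      have hpt : ∀ ω : (Fin n → X) × (Fin m → X),
          F2 ω ^ 2 = (2 / (m:ℝ)) ^ 2 * ((fun z : Fin m → X => (∑ j, g2 (z j)) ^ 2) ω.2) := by
        intro ω; rw [hF2]; dsimp only; ring
      rw [integral_congr_ae (ae_of_all _ hpt), integral_const_mul,
        integral_comp_snd P Q (f := fun z : Fin m → X => (∑ j, g2 (z j)) ^ 2)
          (hGm2.pow_const 2).aestronglyMeasurable]
      calc (2 / (m:ℝ)) ^ 2 * ∫ z, (∑ j, g2 (z j)) ^ 2 ∂Q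
          ≤ (2 / (m:ℝ)) ^ 2 * ((m:ℝ) * (2 * s * ‖δ‖) ^ 2) :=
            mul_le_mul_of_nonneg_left hmom2 (by positivity)
        _ = 16 * (κ * Dv / (m:ℝ)) := by
            rw [hDnorm, ← hss]; field_simp; ring
        _ ≤ 16 * (κ * Dv / (n:ℝ)) := by
            have h1 : κ * Dv / (m:ℝ) ≤ κ * Dv / (n:ℝ) :=
              div_le_div_of_nonneg_left (mul_nonneg hκ0 hD0) (by linarith) hnm
            linarith
    have hI3 : ∫ ω, F3 ω ^ 2 ∂μ ≤ 128 * (κ ^ 2 / (n:ℝ) ^ 2) := by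
      have hpt : ∀ ω : (Fin n → X) × (Fin m → X),
          F3 ω ^ 2 = (1 / ((n:ℝ) * ((n:ℝ) - 1))) ^ 2 * ((fun z : Fin n → X =>
            (∑ i : Fin n, ∑ i' : Fin n, if i ≠ i' then h3k (z i) (z i') else 0) ^ 2) ω.1) := by
        intro ω; rw [hF3]; dsimp only; ring
      rw [integral_congr_ae (ae_of_all _ hpt), integral_const_mul,
        integral_comp_fst P Q (f := fun z : Fin n → X =>
            (∑ i : Fin n, ∑ i' : Fin n, if i ≠ i' then h3k (z i) (z i') else 0) ^ 2)
          (hGm3.pow_const 2).aestronglyMeasurable]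
      calc (1 / ((n:ℝ) * ((n:ℝ) - 1))) ^ 2
            * ∫ z, (∑ i : Fin n, ∑ i' : Fin n, if i ≠ i' then h3k (z i) (z i') else 0) ^ 2 ∂P
          ≤ (1 / ((n:ℝ) * ((n:ℝ) - 1))) ^ 2 * (2 * (n:ℝ) ^ 2 * (4 * κ) ^ 2) :=
            mul_le_mul_of_nonneg_left hmom3 (by positivity)
        _ = 32 * κ ^ 2 / ((n:ℝ) - 1) ^ 2 := by field_simp; ring
        _ ≤ 128 * (κ ^ 2 / (n:ℝ) ^ 2) := by
            rw [show (128:ℝ) * (κ ^ 2 / (n:ℝ) ^ 2) = 128 * κ ^ 2 / (n:ℝ) ^ 2 by ring,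
              div_le_div_iff₀ (pow_pos hN1pos 2) (pow_pos (by linarith : (0:ℝ) < (n:ℝ)) 2)]
            nlinarith [mul_nonneg (sq_nonneg κ) (mul_nonneg
              (by linarith : (0:ℝ) ≤ (n:ℝ) - 2) (by linarith : (0:ℝ) ≤ 3 * (n:ℝ) - 2))]
    have hI4 : ∫ ω, F4 ω ^ 2 ∂μ ≤ 128 * (κ ^ 2 / (n:ℝ) ^ 2) := by
      have hpt : ∀ ω : (Fin n → X) × (Fin m → X),
          F4 ω ^ 2 = (1 / ((m:ℝ) * ((m:ℝ) - 1))) ^ 2 * ((fun z : Fin m → X =>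
            (∑ j : Fin m, ∑ j' : Fin m, if j ≠ j' then h4k (z j) (z j') else 0) ^ 2) ω.2) := by
        intro ω; rw [hF4]; dsimp only; ring
      rw [integral_congr_ae (ae_of_all _ hpt), integral_const_mul,
        integral_comp_snd P Q (f := fun z : Fin m → X =>
            (∑ j : Fin m, ∑ j' : Fin m, if j ≠ j' then h4k (z j) (z j') else 0) ^ 2)
          (hGm4.pow_const 2).aestronglyMeasurable]
      calc (1 / ((m:ℝ) * ((m:ℝ) - 1))) ^ 2
            * ∫ z, (∑ j : Fin m, ∑ j' : Fin m, if j ≠ j' then h4k (z j) (z j') else 0) ^ 2 ∂Q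
          ≤ (1 / ((m:ℝ) * ((m:ℝ) - 1))) ^ 2 * (2 * (m:ℝ) ^ 2 * (4 * κ) ^ 2) :=
            mul_le_mul_of_nonneg_left hmom4 (by positivity)
        _ = 32 * κ ^ 2 / ((m:ℝ) - 1) ^ 2 := by field_simp; ring
        _ ≤ 128 * (κ ^ 2 / (n:ℝ) ^ 2) := by
            rw [show (128:ℝ) * (κ ^ 2 / (n:ℝ) ^ 2) = 128 * κ ^ 2 / (n:ℝ) ^ 2 by ring,
              div_le_div_iff₀ (pow_pos hM1pos 2) (pow_pos (by linarith : (0:ℝ) < (n:ℝ)) 2)]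
            nlinarith [mul_nonneg (sq_nonneg κ) (mul_nonneg
              (by linarith : (0:ℝ) ≤ 2 * (m:ℝ) - 2 - (n:ℝ))
              (by linarith : (0:ℝ) ≤ 2 * (m:ℝ) - 2 + (n:ℝ)))]
    have hI5 : ∫ ω, F5 ω ^ 2 ∂μ ≤ 64 * (κ ^ 2 / (n:ℝ) ^ 2) := by
      have hpt : ∀ ω : (Fin n → X) × (Fin m → X),
          F5 ω ^ 2 = (2 / ((m:ℝ) * (n:ℝ))) ^ 2
            * (∑ i : Fin n, ∑ j : Fin m, w5 (ω.1 i) (ω.2 j)) ^ 2 := by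
        intro ω; rw [hF5]; dsimp only; ring
      rw [integral_congr_ae (ae_of_all _ hpt), integral_const_mul]
      calc (2 / ((m:ℝ) * (n:ℝ))) ^ 2
            * ∫ ω, (∑ i : Fin n, ∑ j : Fin m, w5 (ω.1 i) (ω.2 j)) ^ 2 ∂μ
          ≤ (2 / ((m:ℝ) * (n:ℝ))) ^ 2 * (((n:ℝ) * (m:ℝ)) * (4 * κ) ^ 2) :=
            mul_le_mul_of_nonneg_left hmom5 (by positivity)
        _ = 64 * κ ^ 2 / ((n:ℝ) * (m:ℝ)) := by field_simp; ring
        _ ≤ 64 * (κ ^ 2 / (n:ℝ) ^ 2) := by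
            rw [show (64:ℝ) * (κ ^ 2 / (n:ℝ) ^ 2) = 64 * κ ^ 2 / (n:ℝ) ^ 2 by ring,
              div_le_div_iff₀ (mul_pos (by linarith : (0:ℝ) < (n:ℝ)) (by linarith : (0:ℝ) < (m:ℝ)))
                (pow_pos (by linarith : (0:ℝ) < (n:ℝ)) 2)]
            nlinarith [mul_nonneg (mul_nonneg (sq_nonneg κ) (by linarith : (0:ℝ) ≤ (n:ℝ)))
              (by linarith : (0:ℝ) ≤ (m:ℝ) - (n:ℝ))]
    -- put everything together
    have hsum_int : Integrable (fun ω => F1 ω ^ 2 + F2 ω ^ 2 + F3 ω ^ 2 + F4 ω ^ 2 + F5 ω ^ 2) μ := by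
      have h12 : Integrable (fun ω => F1 ω ^ 2 + F2 ω ^ 2) μ := hF1int.add hF2int
      have h123 : Integrable (fun ω => F1 ω ^ 2 + F2 ω ^ 2 + F3 ω ^ 2) μ := h12.add hF3int
      have h1234 : Integrable (fun ω => F1 ω ^ 2 + F2 ω ^ 2 + F3 ω ^ 2 + F4 ω ^ 2) μ :=
        h123.add hF4int
      exact h1234.add hF5int
    have hpt5 : ∀ ω, (fv ω - Dv) ^ 2
        ≤ 5 * (F1 ω ^ 2 + F2 ω ^ 2 + F3 ω ^ 2 + F4 ω ^ 2 + F5 ω ^ 2) := by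
      intro ω
      rw [hident ω]
      exact five_sq _ _ _ _ _
    have hsplit : ∫ ω, (F1 ω ^ 2 + F2 ω ^ 2 + F3 ω ^ 2 + F4 ω ^ 2 + F5 ω ^ 2) ∂μ
        = (∫ ω, F1 ω ^ 2 ∂μ) + (∫ ω, F2 ω ^ 2 ∂μ) + (∫ ω, F3 ω ^ 2 ∂μ)
          + (∫ ω, F4 ω ^ 2 ∂μ) + (∫ ω, F5 ω ^ 2 ∂μ) := by
      have h12 : Integrable (fun ω => F1 ω ^ 2 + F2 ω ^ 2) μ := hF1int.add hF2int
      have h123 : Integrable (fun ω => F1 ω ^ 2 + F2 ω ^ 2 + F3 ω ^ 2) μ := h12.add hF3int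
      have h1234 : Integrable (fun ω => F1 ω ^ 2 + F2 ω ^ 2 + F3 ω ^ 2 + F4 ω ^ 2) μ :=
        h123.add hF4int
      rw [integral_add h1234 hF5int, integral_add h123 hF4int, integral_add h12 hF3int,
        integral_add hF1int hF2int]
    rw [hD]
    calc variance fv μ ≤ ∫ ω, (fv ω - Dv) ^ 2 ∂μ := hvar
      _ ≤ ∫ ω, 5 * (F1 ω ^ 2 + F2 ω ^ 2 + F3 ω ^ 2 + F4 ω ^ 2 + F5 ω ^ 2) ∂μ :=
          integral_mono hfvDint (hsum_int.const_mul 5) hpt5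
      _ = 5 * ((∫ ω, F1 ω ^ 2 ∂μ) + (∫ ω, F2 ω ^ 2 ∂μ) + (∫ ω, F3 ω ^ 2 ∂μ)
          + (∫ ω, F4 ω ^ 2 ∂μ) + (∫ ω, F5 ω ^ 2 ∂μ)) := by
          rw [integral_const_mul, hsplit]
      _ ≤ 5 * (16 * (κ * Dv / (n:ℝ)) + 16 * (κ * Dv / (n:ℝ)) + 128 * (κ ^ 2 / (n:ℝ) ^ 2)
          + 128 * (κ ^ 2 / (n:ℝ) ^ 2) + 64 * (κ ^ 2 / (n:ℝ) ^ 2)) := by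
          linarith [hI1, hI2, hI3, hI4, hI5]
      _ ≤ 1600 * (κ * Dv / (n:ℝ) + κ ^ 2 / (n:ℝ) ^ 2) := by
          have hA : 0 ≤ κ * Dv / (n:ℝ) := by positivity
          linarith


end VarianceProofMain

/-- Variance bound for the unbiased MMD estimator.
For `n ≤ m ≤ cn` and a nonnegative kernel `k(x,y) = ⟪φ x, φ y⟫` with `‖φ x‖² ≤ κ`,
there is a constant `C > 0` depending only on `c` with
`Var(MMD̂²(X,Y;k)) ≤ C(κ MMD²(p,q;k)/n + κ²/n²)`. -/
theorem mmdSqHat_variance_bound (c : ℝ) (hc : 1 ≤ c) :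
    ∃ C : ℝ, 0 < C ∧
      ∀ (X H : Type) [MeasurableSpace X]
        [NormedAddCommGroup H] [InnerProductSpace ℝ H] [TopologicalSpace.SeparableSpace H]
        [MeasurableSpace H] [BorelSpace H]
        (φ : X → H) (k : X → X → ℝ) (κ : ℝ)
        (p q : Measure X) (_ : IsProbabilityMeasure p) (_ : IsProbabilityMeasure q)
        (n m : ℕ),
        Measurable φ →
        (∀ x y, k x y = ⟪φ x, φ y⟫) →
        (∀ x, ‖φ x‖ ^ 2 ≤ κ) →
        (∀ x y, 0 ≤ k x y) →
        (n : ℝ) ≤ (m : ℝ) → (m : ℝ) ≤ c * n →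
        ProbabilityTheory.variance
            (fun ω : (Fin n → X) × (Fin m → X) => mmdSqHat k ω.1 ω.2)
            ((Measure.pi fun _ : Fin n => p).prod (Measure.pi fun _ : Fin m => q))
          ≤ C * (κ * mmdSq k p q / n + κ ^ 2 / n ^ 2) := by
  refine ⟨1600, by norm_num, ?_⟩
  intro X H mX nG iPS sep mH bH φ k κ p q hp hq n m hφ hk hκb hk0 hnm hmc
  haveI := hp
  haveI := hq
  haveI : SecondCountableTopology H := UniformSpace.secondCountable_of_separable H
  letI : MeasurableSpace (UniformSpace.Completion H) := borel _
  haveI : BorelSpace (UniformSpace.Completion H) := ⟨rfl⟩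
  haveI : TopologicalSpace.SeparableSpace (UniformSpace.Completion H) :=
    UniformSpace.Completion.denseRange_coe.separableSpace
      (UniformSpace.Completion.continuous_coe H)
  haveI : SecondCountableTopology (UniformSpace.Completion H) :=
    UniformSpace.secondCountable_of_separable _
  set φ' : X → UniformSpace.Completion H := fun x => (φ x : UniformSpace.Completion H) with hφ'def
  have hφ' : Measurable φ' := (UniformSpace.Completion.continuous_coe H).measurable.comp hφ
  have hk' : ∀ x y, k x y = ⟪φ' x, φ' y⟫ := by
    intro x y
    rw [hk x y, hφ'def]
    exact (UniformSpace.Completion.inner_coe _ _).symm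
  have hκ' : ∀ x, ‖φ' x‖ ^ 2 ≤ κ := by
    intro x
    rw [hφ'def]
    simp only [UniformSpace.Completion.norm_coe]
    exact hκb x
  exact main_var_bound φ' k κ p q n m c hφ' hk' hκ' hnm hmc
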